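/- Fuchs–van de Graaf inequality: for PSD matrices ρ, σ ∈ ℝ^{M×M} with Tr ρ = Tr σ = 1, we have ‖ρ − σ‖_* ≤ 2√(1 − ℱ(ρ,σ)²). -/

import Mathlib

open Matrix

lemma real_conjTranspose_eq {m n : ℕ} (A : Matrix (Fin m) (Fin n) ℝ) : Aᴴ = Aᵀ := rfl

lemma psd_tmul {m n : ℕ} (A : Matrix (Fin m) (Fin n) ℝ) : (Aᵀ * A).PosSemidef := by
  have h := Matrix.posSemidef_conjTranspose_mul_self A
  rwa [real_conjTranspose_eq] at h

lemma psd_gram {m n : ℕ} (A : Matrix (Fin m) (Fin n) ℝ) : (A * Aᵀ).PosSemidef := by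
  have h := Matrix.posSemidef_self_mul_conjTranspose A
  rwa [real_conjTranspose_eq] at h

/-- The square root of a positive semidefinite matrix, as `Matrix.PosSemidef.sqrt` was defined
in the older Mathlib (removed since). -/
noncomputable def Matrix.PosSemidef.sqrt {n : Type*} [Fintype n] [DecidableEq n]
    {A : Matrix n n ℝ} (hA : A.PosSemidef) : Matrix n n ℝ :=
  hA.1.eigenvectorUnitary.1 * diagonal ((↑) ∘ (√·) ∘ hA.1.eigenvalues) *
    (star hA.1.eigenvectorUnitary : Matrix n n ℝ)

lemma Matrix.PosSemidef.posSemidef_sqrt {M : ℕ} {A : Matrix (Fin M) (Fin M) ℝ}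
    (hA : A.PosSemidef) : hA.sqrt.PosSemidef := by
  unfold Matrix.PosSemidef.sqrt
  have hd : (diagonal (((↑) : ℝ → ℝ) ∘ (√·) ∘ hA.1.eigenvalues)).PosSemidef := by
    rw [posSemidef_diagonal_iff]
    intro i
    simp [Real.sqrt_nonneg]
  exact hd.mul_mul_conjTranspose_same _

lemma psd_sand {M : ℕ} {Kx Ky : Matrix (Fin M) (Fin M) ℝ} (hx : Kx.PosSemidef) (hy : Ky.PosSemidef) :
    (hx.sqrt * Ky * hx.sqrt).PosSemidef := by
  have h := hy.mul_mul_conjTranspose_same hx.sqrt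
  rwa [hx.posSemidef_sqrt.isHermitian.eq] at h

/-- Nuclear norm: sum of singular values, i.e. `Tr[(AᵀA)^{1/2}]`. -/
noncomputable def nuclearNorm {m n : ℕ} (A : Matrix (Fin m) (Fin n) ℝ) : ℝ :=
  (Matrix.PosSemidef.sqrt (psd_tmul A)).trace

/-- Frobenius norm. -/
noncomputable def frobNorm {m n : ℕ} (A : Matrix (Fin m) (Fin n) ℝ) : ℝ :=
  Real.sqrt (Matrix.trace (Aᵀ * A))

/-- Fidelity `Tr[(Kx^{1/2} Ky Kx^{1/2})^{1/2}]` between PSD matrices. -/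
noncomputable def fidelity {M : ℕ} {Kx Ky : Matrix (Fin M) (Fin M) ℝ}
    (hx : Kx.PosSemidef) (hy : Ky.PosSemidef) : ℝ :=
  (Matrix.PosSemidef.sqrt (psd_sand hx hy)).trace

/-! Write `P = √ρ` and factor `σ = B Bᵀ` with `B = √σ V`, where `√σ √ρ = V |√σ √ρ|` is a polar
decomposition, so that `tr (Pᵀ B) = ℱ(ρ, σ) =: F`. Then
`2 (ρ - σ) = (P - B)(P + B)ᵀ + (P + B)(P - B)ᵀ`, and pairing with the orthogonal matrix attaining
`‖ρ - σ‖_*` and applying Cauchy–Schwarz for the Frobenius inner product gives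
`‖ρ - σ‖_* ≤ ‖P - B‖_F ‖P + B‖_F = √(2 - 2F) √(2 + 2F) = 2 √(1 - F²)`. -/

theorem LinearMap.exists_linearIsometry_comp_eq {𝕜 E : Type*} [RCLike 𝕜] [NormedAddCommGroup E]
    [InnerProductSpace 𝕜 E] [FiniteDimensional 𝕜 E] {f g : E →ₗ[𝕜] E}
    (h : ∀ x, ‖f x‖ = ‖g x‖) : ∃ U : E →ₗᵢ[𝕜] E, ∀ x, U (f x) = g x := by
  have hker : LinearMap.ker f ≤ LinearMap.ker g := fun x hx => by
    rw [LinearMap.mem_ker, ← norm_eq_zero, ← h, hx, norm_zero]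
  let U₀ := (LinearMap.ker f).liftQ g hker ∘ₗ f.quotKerEquivRange.symm.toLinearMap
  have hU₀ (x : E) : U₀ ⟨f x, f.mem_range_self x⟩ = g x := by
    simp [U₀]
  let U₁ : LinearMap.range f →ₗᵢ[𝕜] E :=
    { toLinearMap := U₀
      norm_map' := by
        rintro ⟨_, x, rfl⟩
        rw [hU₀, ← h]
        rfl }
  exact ⟨U₁.extend, fun x => (U₁.extend_apply ⟨f x, f.mem_range_self x⟩).trans (hU₀ x)⟩

namespace Matrix

section Unitary

variable {𝕜 n : Type*} [RCLike 𝕜] [Fintype n] [DecidableEq n]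

theorem norm_toEuclideanLin_apply_sq {m : Type*} [Fintype m] [DecidableEq m] (A : Matrix m n 𝕜)
    (x : EuclideanSpace 𝕜 n) :
    ‖toEuclideanLin A x‖ ^ 2 = RCLike.re (inner 𝕜 x (toEuclideanLin (Aᴴ * A) x)) := by
  rw [toLpLin_mul_same, toEuclideanLin_conjTranspose_eq_adjoint, LinearMap.comp_apply,
    LinearMap.adjoint_inner_right, inner_self_eq_norm_sq]

theorem exists_mem_unitaryGroup_mul_eq_of_conjTranspose_mul_self_eq {A B : Matrix n n 𝕜}
    (h : Aᴴ * A = Bᴴ * B) : ∃ V ∈ unitaryGroup n 𝕜, V * A = B := by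
  have hnorm (x : EuclideanSpace 𝕜 n) : ‖toEuclideanLin A x‖ = ‖toEuclideanLin B x‖ := by
    rw [← sq_eq_sq₀ (norm_nonneg _) (norm_nonneg _), norm_toEuclideanLin_apply_sq,
      norm_toEuclideanLin_apply_sq, h]
  obtain ⟨U, hU⟩ := LinearMap.exists_linearIsometry_comp_eq hnorm
  let b := (EuclideanSpace.basisFun n 𝕜).toBasis
  refine ⟨LinearMap.toMatrix b b U.toLinearMap,
    (U.toLinearIsometryEquiv rfl).toMatrix_mem_unitaryGroup _ _, ?_⟩
  have hV : toEuclideanLin (LinearMap.toMatrix b b U.toLinearMap) = U.toLinearMap :=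
    toLin_toMatrix b b _
  apply toEuclideanLin.injective
  ext x : 1
  rw [toLpLin_mul_same, LinearMap.comp_apply, hV, LinearIsometry.coe_toLinearMap, hU]

end Unitary

section Sqrt

open scoped MatrixOrder

variable {n : Type*} [Fintype n] [DecidableEq n] {A : Matrix n n ℝ}

theorem PosSemidef.sqrt_eq_cfcSqrt (hA : A.PosSemidef) : hA.sqrt = CFC.sqrt A := by
  rw [CFC.sqrt_eq_cfc, cfc_nnreal_eq_real _ A hA.nonneg, hA.1.cfc_eq]
  simp only [IsHermitian.cfc, PosSemidef.sqrt, Unitary.conjStarAlgAut_apply]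
  congr 3
  funext i
  simp [Real.coe_sqrt, hA.eigenvalues_nonneg i]

theorem PosSemidef.sqrt_mul_self (hA : A.PosSemidef) : hA.sqrt * hA.sqrt = A := by
  rw [hA.sqrt_eq_cfcSqrt]
  exact CFC.sqrt_mul_sqrt_self A hA.nonneg

theorem PosSemidef.transpose_sqrt (hA : A.PosSemidef) : hA.sqrtᵀ = hA.sqrt := by
  rw [hA.sqrt_eq_cfcSqrt]
  exact (nonneg_iff_posSemidef.mp (CFC.sqrt_nonneg A)).isHermitian.eq

theorem PosSemidef.sqrt_congr {B : Matrix n n ℝ} (hA : A.PosSemidef) (hB : B.PosSemidef)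
    (h : A = B) : hA.sqrt = hB.sqrt := by
  subst h
  rfl

end Sqrt

section Trace

variable {m n : Type*} [Fintype m] [Fintype n]

theorem trace_transpose_mul_eq_sum (X Y : Matrix m n ℝ) :
    trace (Xᵀ * Y) = ∑ p : m × n, X p.1 p.2 * Y p.1 p.2 := by
  rw [trace, Fintype.sum_prod_type, Finset.sum_comm]
  simp only [diag, mul_apply, transpose_apply]

theorem trace_transpose_mul_le (X Y : Matrix m n ℝ) :
    trace (Xᵀ * Y) ≤ √(trace (Xᵀ * X)) * √(trace (Yᵀ * Y)) := by
  simp only [trace_transpose_mul_eq_sum, ← sq]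
  exact Real.sum_mul_le_sqrt_mul_sqrt _ _ _

theorem trace_mul_transpose_mul_le_of_mem_orthogonalGroup [DecidableEq m]
    {V : Matrix m m ℝ} (hV : V ∈ orthogonalGroup m ℝ) (X Y : Matrix m n ℝ) :
    trace (X * Yᵀ * V) ≤ √(trace (Xᵀ * X)) * √(trace (Yᵀ * Y)) := by
  have hVX : (V * X)ᵀ * (V * X) = Xᵀ * X := by
    rw [transpose_mul, Matrix.mul_assoc, ← Matrix.mul_assoc Vᵀ,
      (mem_orthogonalGroup_iff' _ _).mp hV, Matrix.one_mul]
  calc trace (X * Yᵀ * V) = trace (Yᵀ * (V * X)) := by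
        rw [Matrix.mul_assoc, trace_mul_comm, Matrix.mul_assoc]
    _ ≤ √(trace (Yᵀ * Y)) * √(trace (Xᵀ * X)) := by
        simpa only [hVX] using trace_transpose_mul_le Y (V * X)
    _ = √(trace (Xᵀ * X)) * √(trace (Yᵀ * Y)) := mul_comm _ _

end Trace

end Matrix

open Matrix.PosSemidef

-- The polar decomposition `C = V √(CᵀC)`.
theorem exists_mem_orthogonalGroup_trace_transpose_mul_eq_nuclearNorm {m : ℕ}
    (C : Matrix (Fin m) (Fin m) ℝ) :
    ∃ V ∈ orthogonalGroup (Fin m) ℝ, trace (Cᵀ * V) = nuclearNorm C := by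
  set R := (psd_tmul C).sqrt
  have hR : Rᵀ = R := transpose_sqrt _
  obtain ⟨V, hV, hVR⟩ :=
    exists_mem_unitaryGroup_mul_eq_of_conjTranspose_mul_self_eq (A := R) (B := C) <| by
      change Rᵀ * R = Cᵀ * C
      rw [hR, sqrt_mul_self]
  have hCV : Cᵀ * V = R := by
    rw [← hVR, transpose_mul, hR, Matrix.mul_assoc, (mem_orthogonalGroup_iff' _ _).mp hV,
      Matrix.mul_one]
  exact ⟨V, hV, congrArg trace hCV⟩

theorem nuclearNorm_mul_transpose_sub_mul_transpose_le {m k : ℕ} (P B : Matrix (Fin m) (Fin k) ℝ)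
    (hP : trace (Pᵀ * P) = 1) (hB : trace (Bᵀ * B) = 1) :
    nuclearNorm (P * Pᵀ - B * Bᵀ) ≤ 2 * √(1 - trace (Pᵀ * B) ^ 2) := by
  set t := trace (Pᵀ * B)
  obtain ⟨V, hV, hC⟩ := exists_mem_orthogonalGroup_trace_transpose_mul_eq_nuclearNorm
    (P * Pᵀ - B * Bᵀ)
  have hBP : trace (Bᵀ * P) = t := by rw [← trace_transpose, transpose_mul, transpose_transpose]
  have hsub : trace ((P - B)ᵀ * (P - B)) = 2 - 2 * t := by
    rw [transpose_sub, Matrix.sub_mul, Matrix.mul_sub, Matrix.mul_sub, trace_sub, trace_sub,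
      trace_sub, hP, hB, hBP]
    ring
  have hadd : trace ((P + B)ᵀ * (P + B)) = 2 + 2 * t := by
    rw [transpose_add, Matrix.add_mul, Matrix.mul_add, Matrix.mul_add, trace_add, trace_add,
      trace_add, hP, hB, hBP]
    ring
  have hsplit : 2 * trace ((P * Pᵀ - B * Bᵀ)ᵀ * V) =
      trace ((P - B) * (P + B)ᵀ * V) + trace ((P + B) * (P - B)ᵀ * V) := by
    rw [← trace_add, ← Matrix.add_mul, two_mul, ← trace_add, ← Matrix.add_mul]
    congr 2
    simp only [transpose_sub, transpose_add, transpose_mul, transpose_transpose, Matrix.sub_mul,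
      Matrix.mul_sub, Matrix.add_mul, Matrix.mul_add]
    abel
  have h₁ := trace_mul_transpose_mul_le_of_mem_orthogonalGroup hV (P - B) (P + B)
  have h₂ := trace_mul_transpose_mul_le_of_mem_orthogonalGroup hV (P + B) (P - B)
  rw [hsub, hadd] at h₁ h₂
  have hsqrt : √(2 - 2 * t) * √(2 + 2 * t) = 2 * √(1 - t ^ 2) := by
    rw [← Real.sqrt_mul (hsub ▸ (psd_tmul (P - B)).trace_nonneg),
      show (2 - 2 * t) * (2 + 2 * t) = 2 ^ 2 * (1 - t ^ 2) by ring,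
      Real.sqrt_mul (by norm_num), Real.sqrt_sq zero_le_two]
  linarith

theorem exists_mul_transpose_eq_trace_eq_fidelity {M : ℕ} {ρ σ : Matrix (Fin M) (Fin M) ℝ}
    (hρ : ρ.PosSemidef) (hσ : σ.PosSemidef) :
    ∃ B, B * Bᵀ = σ ∧ trace (hρ.sqrtᵀ * B) = fidelity hρ hσ := by
  set P := hρ.sqrt
  set Q := hσ.sqrt
  obtain ⟨V, hV, hVtr⟩ := exists_mem_orthogonalGroup_trace_transpose_mul_eq_nuclearNorm (Q * P)
  have hF : fidelity hρ hσ = nuclearNorm (Q * P) := by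
    have hQP : (Q * P)ᵀ * (Q * P) = P * σ * P := by
      rw [transpose_mul, transpose_sqrt, transpose_sqrt, ← Matrix.mul_assoc, Matrix.mul_assoc P,
        sqrt_mul_self]
    exact congrArg trace (sqrt_congr _ _ hQP.symm)
  refine ⟨Q * V, ?_, ?_⟩
  · rw [transpose_mul, Matrix.mul_assoc, ← Matrix.mul_assoc V, (mem_orthogonalGroup_iff _ _).mp hV,
      Matrix.one_mul, transpose_sqrt, sqrt_mul_self]
  · rw [hF, ← hVtr, transpose_mul, transpose_sqrt hσ, Matrix.mul_assoc]

theorem fuchs_van_de_graaf (M : ℕ) (ρ σ : Matrix (Fin M) (Fin M) ℝ)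
    (hρ : ρ.PosSemidef) (hσ : σ.PosSemidef)
    (hρ1 : Matrix.trace ρ = 1) (hσ1 : Matrix.trace σ = 1) :
    nuclearNorm (ρ - σ) ≤ 2 * Real.sqrt (1 - (fidelity hρ hσ) ^ 2) := by
  obtain ⟨B, hBB, hB⟩ := exists_mul_transpose_eq_trace_eq_fidelity hρ hσ
  have hPP : hρ.sqrt * hρ.sqrtᵀ = ρ := by rw [transpose_sqrt, sqrt_mul_self]
  have h := nuclearNorm_mul_transpose_sub_mul_transpose_le hρ.sqrt B
    (by rw [trace_mul_comm, hPP, hρ1]) (by rw [trace_mul_comm, hBB, hσ1])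
  rwa [hPP, hBB, hB] at h
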